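/- Consider the error dynamics ė₂ = (x₉ − e₂ − x₂*)/(R₂C₂) + x₃(1−u₁)/C₂, ė₅ = (x₉ − e₅ − x₅*)/(R₅C₅) + x₆(1−u₂)/C₅, ẋ₉ = (1/C₉)[(e₂+x₂*−x₉)/R₂ + (e₅+x₅*−x₉)/R₅ + (x₇−x₉)/R₇ − x₉/R_L]. If x₇ is set equal to z₇ given in equation (42) (with x₉ ≠ 0), then the function V = (C₂/2)e₂² + (C₅/2)e₅² + (C₉/2)x₉² satisfies V̇ = −e₂²/R₂ − e₅²/R₅ − (x₉ − x₉*)²/R₇ ≤ 0. -/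

import Mathlib

/-!
Along the error dynamics each term of `V̇ = C₂e₂ė₂ + C₅e₅ė₅ + C₉x₉ẋ₉` splits into a dissipated
power and a cross term: `C e ė = -e²/R + e·p` for the two input capacitors, and the choice
`x₇ = z₇` of the backstepping input makes the output capacitor contribute
`-(e₂p₂ + e₅p₅) - (x₉ - x₉*)²/R₇`, cancelling both cross terms.
-/

theorem HasDerivAt.half_const_mul_sq {f : ℝ → ℝ} {f' t : ℝ} (hf : HasDerivAt f f' t) (C : ℝ) :
    HasDerivAt (fun s => C / 2 * f s ^ 2) (C * f t * f') t := by
  refine ((hf.pow 2).const_mul (C / 2)).congr_deriv ?_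
  ring

theorem capacitor_power_eq {C : ℝ} (hC : C ≠ 0) (R e x xs i : ℝ) :
    C * e * ((x - e - xs) / (R * C) + i / C) = -e ^ 2 / R + e * ((x - xs) / R + i) := by
  field_simp
  ring

theorem output_power_eq_of_backstepping {R₂ R₅ R₇ RL C₉ x₂s x₅s x₉s e₂ e₅ p₂ p₅ x₉ x₇ : ℝ}
    (hR₇ : R₇ ≠ 0) (hC₉ : C₉ ≠ 0) (hx₉ : x₉ ≠ 0)
    (hx₇ : x₇ = -R₇ * (1 / x₉) * (e₂ * p₂ + e₅ * p₅) +
      R₇ * (x₉ / RL - (e₂ + x₂s - x₉) / R₂ - (e₅ + x₅s - x₉) / R₅) +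
      (1 / x₉) * (-(x₉s ^ 2) + 2 * x₉ * x₉s)) :
    C₉ * x₉ * ((1 / C₉) * ((e₂ + x₂s - x₉) / R₂ + (e₅ + x₅s - x₉) / R₅ +
        (x₇ - x₉) / R₇ - x₉ / RL)) = -(e₂ * p₂ + e₅ * p₅) - (x₉ - x₉s) ^ 2 / R₇ := by
  subst hx₇
  field_simp
  ring

theorem stmt_5_general (R₂ R₅ R₇ RL C₂ C₅ C₉ x₂s x₅s x₉s : ℝ)
    (hR₂ : 0 < R₂) (hR₅ : 0 < R₅) (hR₇ : 0 < R₇)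
    (hC₂ : 0 < C₂) (hC₅ : 0 < C₅) (hC₉ : 0 < C₉)
    (e₂ e₅ x₉ x₃ x₆ u₁ u₂ x₇ : ℝ → ℝ)
    (hx₉ne : ∀ t, x₉ t ≠ 0)
    (hx₇ : ∀ t, x₇ t =
      -R₇ * (1 / x₉ t) *
        (e₂ t * ((x₉ t - x₂s) / R₂ + x₃ t * (1 - u₁ t)) +
         e₅ t * ((x₉ t - x₅s) / R₅ + x₆ t * (1 - u₂ t))) +
      R₇ * (x₉ t / RL - (e₂ t + x₂s - x₉ t) / R₂ - (e₅ t + x₅s - x₉ t) / R₅) +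
      (1 / x₉ t) * (-(x₉s ^ 2) + 2 * x₉ t * x₉s))
    (hde₂ : ∀ t, HasDerivAt e₂
      ((x₉ t - e₂ t - x₂s) / (R₂ * C₂) + x₃ t * (1 - u₁ t) / C₂) t)
    (hde₅ : ∀ t, HasDerivAt e₅
      ((x₉ t - e₅ t - x₅s) / (R₅ * C₅) + x₆ t * (1 - u₂ t) / C₅) t)
    (hdx₉ : ∀ t, HasDerivAt x₉
      ((1 / C₉) * ((e₂ t + x₂s - x₉ t) / R₂ + (e₅ t + x₅s - x₉ t) / R₅ +
        (x₇ t - x₉ t) / R₇ - x₉ t / RL)) t) :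
    ∀ t, HasDerivAt (fun s => C₂ / 2 * (e₂ s) ^ 2 + C₅ / 2 * (e₅ s) ^ 2 +
        C₉ / 2 * (x₉ s) ^ 2)
      (-(e₂ t) ^ 2 / R₂ - (e₅ t) ^ 2 / R₅ - (x₉ t - x₉s) ^ 2 / R₇) t ∧
      -(e₂ t) ^ 2 / R₂ - (e₅ t) ^ 2 / R₅ - (x₉ t - x₉s) ^ 2 / R₇ ≤ 0 := by
  intro t
  have hV := (((hde₂ t).half_const_mul_sq C₂).add ((hde₅ t).half_const_mul_sq C₅)).add
    ((hdx₉ t).half_const_mul_sq C₉)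
  refine ⟨hV.congr_deriv ?_, ?_⟩
  · linear_combination capacitor_power_eq hC₂.ne' R₂ (e₂ t) (x₉ t) x₂s (x₃ t * (1 - u₁ t)) +
      capacitor_power_eq hC₅.ne' R₅ (e₅ t) (x₉ t) x₅s (x₆ t * (1 - u₂ t)) +
      output_power_eq_of_backstepping hR₇.ne' hC₉.ne' (hx₉ne t) (hx₇ t)
  · have : 0 ≤ e₂ t ^ 2 / R₂ + e₅ t ^ 2 / R₅ + (x₉ t - x₉s) ^ 2 / R₇ := by positivity
    linarith [neg_div R₂ (e₂ t ^ 2), neg_div R₅ (e₅ t ^ 2)]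

/-- If `x₇` is set to the backstepping value `z₇`, then the Lyapunov function
`V = (C₂/2)e₂² + (C₅/2)e₅² + (C₉/2)x₉²` has derivative
`V̇ = −e₂²/R₂ − e₅²/R₅ − (x₉−x₉*)²/R₇ ≤ 0` along the error dynamics. -/
theorem stmt_5 (R₂ R₅ R₇ RL C₂ C₅ C₉ x₂s x₅s x₉s : ℝ)
    (hR₂ : 0 < R₂) (hR₅ : 0 < R₅) (hR₇ : 0 < R₇) (hRL : 0 < RL)
    (hC₂ : 0 < C₂) (hC₅ : 0 < C₅) (hC₉ : 0 < C₉) (hx₉s : 0 < x₉s)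
    (hbal : x₉s / RL = (x₂s - x₉s) / R₂ + (x₅s - x₉s) / R₅)
    (e₂ e₅ x₉ x₃ x₆ u₁ u₂ x₇ : ℝ → ℝ)
    (hx₉ne : ∀ t, x₉ t ≠ 0)
    (hx₇ : ∀ t, x₇ t =
      -R₇ * (1 / x₉ t) *
        (e₂ t * ((x₉ t - x₂s) / R₂ + x₃ t * (1 - u₁ t)) +
         e₅ t * ((x₉ t - x₅s) / R₅ + x₆ t * (1 - u₂ t))) +
      R₇ * (x₉ t / RL - (e₂ t + x₂s - x₉ t) / R₂ - (e₅ t + x₅s - x₉ t) / R₅) +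
      (1 / x₉ t) * (-(x₉s ^ 2) + 2 * x₉ t * x₉s))
    (hde₂ : ∀ t, HasDerivAt e₂
      ((x₉ t - e₂ t - x₂s) / (R₂ * C₂) + x₃ t * (1 - u₁ t) / C₂) t)
    (hde₅ : ∀ t, HasDerivAt e₅
      ((x₉ t - e₅ t - x₅s) / (R₅ * C₅) + x₆ t * (1 - u₂ t) / C₅) t)
    (hdx₉ : ∀ t, HasDerivAt x₉
      ((1 / C₉) * ((e₂ t + x₂s - x₉ t) / R₂ + (e₅ t + x₅s - x₉ t) / R₅ +
        (x₇ t - x₉ t) / R₇ - x₉ t / RL)) t) :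
    ∀ t, HasDerivAt (fun s => C₂ / 2 * (e₂ s) ^ 2 + C₅ / 2 * (e₅ s) ^ 2 +
        C₉ / 2 * (x₉ s) ^ 2)
      (-(e₂ t) ^ 2 / R₂ - (e₅ t) ^ 2 / R₅ - (x₉ t - x₉s) ^ 2 / R₇) t ∧
      -(e₂ t) ^ 2 / R₂ - (e₅ t) ^ 2 / R₅ - (x₉ t - x₉s) ^ 2 / R₇ ≤ 0 :=
  stmt_5_general R₂ R₅ R₇ RL C₂ C₅ C₉ x₂s x₅s x₉s hR₂ hR₅ hR₇ hC₂ hC₅ hC₉ e₂ e₅ x₉ x₃ x₆ u₁ u₂ x₇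
    hx₉ne hx₇ hde₂ hde₅ hdx₉
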